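/- Set N = 1 + h. An element b ∈ P is regular mod N, meaning (b, α^∨) ∉ Nℤ for all α ∈ R, if and only if b = w(ρ) + Nλ for some w ∈ W and λ ∈ P. Equivalently, the regular elements of P/NP form a single W-orbit, namely the orbit of the image of ρ. -/
import Mathlib


noncomputable section

open scoped RealInnerProductSpace BigOperators

/-- Euclidean space `ℝ^n`, the ambient space of the root system. -/
abbrev Vn (n : ℕ) := EuclideanSpace ℝ (Fin n)

/-- The coroot `α^∨ = 2α/(α,α)` of a vector `α`. -/
def coroot {n : ℕ} (α : Vn n) : Vn n := (2 / ⟪α, α⟫) • α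

/-- The reflection `s_α` applied to `β`: `β − (β, α^∨)·α`. -/
def reflVec {n : ℕ} (α β : Vn n) : Vn n := β - (2 * ⟪β, α⟫ / ⟪α, α⟫) • α

/-- An irreducible reduced crystallographic root system of rank `n` in `ℝ^n`, together
with a fixed base of simple roots `α_1,…,α_n`, the corresponding set of positive roots,
the fundamental weights `ω_1,…,ω_n` and the highest short root `θ`. -/
structure RootSystemData (n : ℕ) where
  /-- the set of roots -/
  R : Finset (Vn n)
  /-- the set of positive roots -/
  Rplus : Finset (Vn n)
  /-- the simple roots `α_1,…,α_n` -/
  sroot : Fin n → Vn n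
  /-- the fundamental weights `ω_1,…,ω_n` -/
  fw : Fin n → Vn n
  /-- the highest short root `θ` -/
  hst : Vn n
  root_ne_zero : ∀ α ∈ R, α ≠ (0 : Vn n)
  span_top : Submodule.span ℝ (R : Set (Vn n)) = ⊤
  reflect_mem : ∀ α ∈ R, ∀ β ∈ R, reflVec α β ∈ R
  crystallographic : ∀ α ∈ R, ∀ β ∈ R, ∃ z : ℤ, 2 * ⟪β, α⟫ / ⟪α, α⟫ = (z : ℝ)
  reduced : ∀ α ∈ R, ∀ c : ℝ, c • α ∈ R → c = 1 ∨ c = -1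
  irreducible : ∀ S : Set (Vn n), (∃ α ∈ R, α ∈ S) →
    (∀ α ∈ R, ∀ β ∈ R, α ∈ S → ⟪α, β⟫ ≠ 0 → β ∈ S) → ∀ β ∈ R, β ∈ S
  sroot_mem : ∀ i, sroot i ∈ Rplus
  pos_sub : Rplus ⊆ R
  pos_or : ∀ α ∈ R, α ∈ Rplus ∨ -α ∈ Rplus
  pos_not_and : ∀ α ∈ Rplus, -α ∉ Rplus
  pos_decomp : ∀ α ∈ Rplus, ∃ c : Fin n → ℕ, α = ∑ i, (c i : ℝ) • sroot i
  fw_pair : ∀ i j, ⟪fw i, coroot (sroot j)⟫ = if i = j then 1 else 0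
  theta_mem : hst ∈ Rplus
  theta_short : ∀ α ∈ R, ⟪hst, hst⟫ ≤ ⟪α, α⟫
  theta_highest : ∀ α ∈ R, ∃ c : Fin n → ℝ, (∀ i, 0 ≤ c i) ∧
    coroot hst - coroot α = ∑ i, c i • coroot (sroot i)

namespace RootSystemData

variable {n : ℕ} (D : RootSystemData n)

/-- The weight lattice `P = ⊕_i ℤ·ω_i`. -/
def P : Submodule ℤ (Vn n) := Submodule.span ℤ (Set.range D.fw)

/-- `ρ = ω_1 + ⋯ + ω_n` (the half-sum of the positive roots). -/
def rho : Vn n := ∑ i, D.fw i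

/-- The Coxeter number `h = 1 + (ρ, θ^∨)`. -/
def h : ℝ := 1 + ⟪D.rho, coroot D.hst⟫

/-- The Weyl group `W`, as the subgroup of `GL(ℝ^n)` generated by the reflections
`s_α`, `α ∈ R`. -/
def Weyl : Subgroup ((Vn n) ≃ₗ[ℝ] (Vn n)) :=
  Subgroup.closure { w | ∃ α ∈ D.R, ∀ v, w v = reflVec α v }

/-- `ω_r` is a minuscule (fundamental) weight: `(ω_r, α^∨) ≤ 1` for all `α ∈ R_+`. -/
def Minuscule (r : Fin n) : Prop := ∀ α ∈ D.Rplus, ⟪D.fw r, coroot α⟫ ≤ 1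

end RootSystemData

section StrangeAux

open Finset

/-- `x : ℝ` is an integer. -/
def Zint (x : ℝ) : Prop := ∃ z : ℤ, x = z

namespace Zint

lemma intCast (z : ℤ) : Zint (z : ℝ) := ⟨z, rfl⟩
lemma zero : Zint (0 : ℝ) := ⟨0, by norm_num⟩
lemma one : Zint (1 : ℝ) := ⟨1, by norm_num⟩
lemma add {x y : ℝ} (hx : Zint x) (hy : Zint y) : Zint (x + y) := by
  obtain ⟨a, rfl⟩ := hx; obtain ⟨b, rfl⟩ := hy; exact ⟨a + b, by push_cast; ring⟩
lemma neg {x : ℝ} (hx : Zint x) : Zint (-x) := by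
  obtain ⟨a, rfl⟩ := hx; exact ⟨-a, by push_cast; ring⟩
lemma sub {x y : ℝ} (hx : Zint x) (hy : Zint y) : Zint (x - y) := by
  obtain ⟨a, rfl⟩ := hx; obtain ⟨b, rfl⟩ := hy; exact ⟨a - b, by push_cast; ring⟩
lemma mul {x y : ℝ} (hx : Zint x) (hy : Zint y) : Zint (x * y) := by
  obtain ⟨a, rfl⟩ := hx; obtain ⟨b, rfl⟩ := hy; exact ⟨a * b, by push_cast; ring⟩
lemma one_le_abs {x : ℝ} (hx : Zint x) (h0 : x ≠ 0) : 1 ≤ |x| := by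
  obtain ⟨a, rfl⟩ := hx
  have ha : a ≠ 0 := by exact_mod_cast h0
  have := Int.one_le_abs ha
  calc (1:ℝ) = ((1:ℤ):ℝ) := by norm_num
  _ ≤ ((|a| : ℤ) : ℝ) := by exact_mod_cast this
  _ = |(a:ℝ)| := by push_cast; ring
lemma one_le {x : ℝ} (hx : Zint x) (h0 : 0 < x) : 1 ≤ x := by
  have := hx.one_le_abs (ne_of_gt h0); rwa [abs_of_pos h0] at this
lemma add_one_le {x y : ℝ} (hx : Zint x) (hy : Zint y) (h : x < y) : x + 1 ≤ y := by
  have h1 : 0 < y - x := by linarith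
  have := (hy.sub hx).one_le h1; linarith
lemma eq_zero_or_eq_one {x : ℝ} (hx : Zint x) (h0 : 0 ≤ x) (h1 : x ≤ 1) : x = 0 ∨ x = 1 := by
  obtain ⟨a, rfl⟩ := hx
  have ha0 : 0 ≤ a := by exact_mod_cast h0
  have ha1 : a ≤ 1 := by exact_mod_cast h1
  interval_cases a
  · left; norm_num
  · right; norm_num

end Zint

variable {n : ℕ}

lemma pair_eq (v α : Vn n) : ⟪v, coroot α⟫ = 2 * ⟪v, α⟫ / ⟪α, α⟫ := by
  show ⟪v, (2 / ⟪α, α⟫) • α⟫ = _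
  rw [real_inner_smul_right]; ring

lemma coroot_neg (α : Vn n) : coroot (-α) = -(coroot α) := by
  show (2 / ⟪-α, -α⟫) • (-α) = -((2 / ⟪α, α⟫) • α)
  rw [inner_neg_neg, smul_neg]

lemma pair_self {α : Vn n} (hα : α ≠ 0) : ⟪α, coroot α⟫ = 2 := by
  have hs : ⟪α, α⟫ ≠ (0:ℝ) := inner_self_ne_zero.2 hα
  rw [pair_eq, mul_div_assoc, div_self hs, mul_one]

/-- the reflection as a linear map -/
def sReflLM (α : Vn n) : Vn n →ₗ[ℝ] Vn n :=
  LinearMap.id - LinearMap.smulRight ((innerSL ℝ (coroot α)).toLinearMap) α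

lemma sReflLM_apply (α v : Vn n) : sReflLM α v = v - ⟪v, coroot α⟫ • α := by
  show v - ⟪coroot α, v⟫ • α = v - ⟪v, coroot α⟫ • α
  rw [real_inner_comm]

lemma sReflLM_reflVec (α v : Vn n) : sReflLM α v = reflVec α v := by
  rw [sReflLM_apply, reflVec, pair_eq]

lemma sReflLM_invol (α : Vn n) : Function.Involutive (sReflLM α) := by
  intro v
  by_cases hα : α = 0
  · simp only [sReflLM_apply, hα, smul_zero, sub_zero]
  · set t := ⟪v, coroot α⟫ with ht
    rw [sReflLM_apply, sReflLM_apply, inner_sub_left, real_inner_smul_left, pair_self hα, ← ht,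
      mul_two, sub_smul, add_smul]
    abel

/-- the reflection `s_α` as a linear equivalence -/
def sRefl (α : Vn n) : Vn n ≃ₗ[ℝ] Vn n :=
  LinearEquiv.ofInvolutive (sReflLM α) (sReflLM_invol α)

@[simp] lemma sRefl_apply (α v : Vn n) : sRefl α v = v - ⟪v, coroot α⟫ • α :=
  sReflLM_apply α v

lemma sRefl_reflVec (α v : Vn n) : sRefl α v = reflVec α v := sReflLM_reflVec α v

lemma sRefl_sRefl (α v : Vn n) : sRefl α (sRefl α v) = v := sReflLM_invol α v

@[simp] lemma sRefl_symm (α : Vn n) : (sRefl α).symm = sRefl α := by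
  refine LinearEquiv.ext fun v => ?_
  apply (sRefl α).injective
  rw [LinearEquiv.apply_symm_apply, sRefl_sRefl]

lemma sRefl_inner (α u v : Vn n) : ⟪sRefl α u, sRefl α v⟫ = ⟪u, v⟫ := by
  by_cases hα : α = 0
  · have hc : coroot α = 0 := by rw [hα]; show (2 / ⟪(0:Vn n), (0:Vn n)⟫) • (0:Vn n) = 0; simp
    simp only [sRefl_apply, hc, inner_zero_right, zero_smul, sub_zero]
  · have hs : ⟪α, α⟫ ≠ (0:ℝ) := inner_self_ne_zero.2 hα
    simp only [sRefl_apply, pair_eq, inner_sub_left, inner_sub_right, real_inner_smul_left,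
      real_inner_smul_right]
    rw [real_inner_comm α v, real_inner_comm α u]
    set S := ⟪α, α⟫ with hS
    set A := ⟪u, α⟫ with hA
    set B := ⟪v, α⟫ with hB
    field_simp
    ring

end StrangeAux

section StrangeAux2
open Finset
variable {n : ℕ} (D : RootSystemData n)

lemma theta_R : D.hst ∈ D.R := D.pos_sub D.theta_mem

lemma sroot_R (i : Fin n) : D.sroot i ∈ D.R := D.pos_sub (D.sroot_mem i)

lemma root_pos {α : Vn n} (hα : α ∈ D.R) : 0 < ⟪α, α⟫ :=
  lt_of_le_of_ne real_inner_self_nonneg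
    (Ne.symm (inner_self_ne_zero.2 (D.root_ne_zero α hα)))

lemma cry {α β : Vn n} (hα : α ∈ D.R) (hβ : β ∈ D.R) : Zint ⟪β, coroot α⟫ := by
  obtain ⟨z, hz⟩ := D.crystallographic α hα β hβ
  exact ⟨z, by rw [pair_eq]; exact hz⟩

lemma sroot_span : Submodule.span ℝ (Set.range D.sroot) = ⊤ := by
  rw [← top_le_iff, ← D.span_top, Submodule.span_le]
  intro α hα
  have key : ∀ β ∈ D.Rplus, (β : Vn n) ∈ Submodule.span ℝ (Set.range D.sroot) := by
    intro β hβ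
    obtain ⟨c, hc⟩ := D.pos_decomp β hβ
    rw [hc]
    exact Submodule.sum_mem _ fun i _ =>
      Submodule.smul_mem _ _ (Submodule.subset_span ⟨i, rfl⟩)
  rcases D.pos_or α (Finset.mem_coe.1 hα) with h | h
  · exact key _ h
  · rw [← neg_neg α]
    exact Submodule.neg_mem _ (key _ h)

lemma cs_span : Submodule.span ℝ (Set.range fun i => coroot (D.sroot i)) = ⊤ := by
  rw [← top_le_iff, ← sroot_span D, Submodule.span_le]
  rintro _ ⟨i, rfl⟩
  have hs : ⟪D.sroot i, D.sroot i⟫ ≠ (0:ℝ) := ne_of_gt (root_pos D (sroot_R D i))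
  have key : ∀ s : ℝ, s ≠ 0 → (s / 2) * (2 / s) = 1 := fun s h => by field_simp
  have h1 := key _ hs
  have : D.sroot i = (⟪D.sroot i, D.sroot i⟫ / 2) • coroot (D.sroot i) := by
    show D.sroot i = (⟪D.sroot i, D.sroot i⟫ / 2) • ((2 / ⟪D.sroot i, D.sroot i⟫) • D.sroot i)
    rw [smul_smul, h1, one_smul]
  rw [this]
  exact Submodule.smul_mem _ _ (Submodule.subset_span ⟨i, rfl⟩)

lemma eq_of_pair {u v : Vn n}
    (h : ∀ i, ⟪u, coroot (D.sroot i)⟫ = ⟪v, coroot (D.sroot i)⟫) : u = v := by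
  have hz : ∀ x ∈ Submodule.span ℝ (Set.range fun i => coroot (D.sroot i)), ⟪u - v, x⟫ = 0 := by
    intro x hx
    induction hx using Submodule.span_induction with
    | mem x hx => obtain ⟨i, rfl⟩ := hx; rw [inner_sub_left, h i, sub_self]
    | zero => exact inner_zero_right _
    | add x y _ _ hx hy => rw [inner_add_right, hx, hy, add_zero]
    | smul c x _ hx => rw [real_inner_smul_right, hx, mul_zero]
  have h0 : ⟪u - v, u - v⟫ = (0:ℝ) := hz _ (by rw [cs_span]; trivial)
  have h1 : u - v = 0 := inner_self_eq_zero.1 h0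
  exact sub_eq_zero.1 h1
  
lemma cs_rep (u : Vn n) : u = ∑ i, ⟪D.fw i, u⟫ • coroot (D.sroot i) := by
  have hu : u ∈ Submodule.span ℝ (Set.range fun i => coroot (D.sroot i)) := by
    rw [cs_span]; trivial
  obtain ⟨t, ht⟩ := (Submodule.mem_span_range_iff_exists_fun ℝ).1 hu
  have hcoef : ∀ j, ⟪D.fw j, u⟫ = t j := by
    intro j
    rw [← ht, inner_sum]
    simp only [real_inner_smul_right, D.fw_pair, mul_ite, mul_one, mul_zero,
      Finset.sum_ite_eq', Finset.sum_ite_eq, Finset.mem_univ, if_true]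
  conv_lhs => rw [← ht]
  refine Finset.sum_congr rfl fun i _ => ?_
  rw [hcoef i]

lemma inner_expand (v u : Vn n) : ⟪v, u⟫ = ∑ i, ⟪D.fw i, u⟫ * ⟪v, coroot (D.sroot i)⟫ := by
  conv_lhs => rw [cs_rep D u]
  rw [inner_sum]
  exact Finset.sum_congr rfl fun i _ => real_inner_smul_right _ _ _

/-- coefficient of `v` on the simple root `α_i` -/
def kap (i : Fin n) (v : Vn n) : ℝ := 2 / ⟪D.sroot i, D.sroot i⟫ * ⟪D.fw i, v⟫

lemma fw_sroot (i j : Fin n) :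
    ⟪D.fw i, D.sroot j⟫ = if i = j then ⟪D.sroot j, D.sroot j⟫ / 2 else 0 := by
  have h := D.fw_pair i j
  rw [pair_eq] at h
  have hs : ⟪D.sroot j, D.sroot j⟫ ≠ (0:ℝ) := ne_of_gt (root_pos D (sroot_R D j))
  have key : ∀ x s y : ℝ, s ≠ 0 → 2 * x / s = y → x = y * s / 2 := by
    intro x s y hsne hxy
    field_simp at hxy ⊢
    linarith
  by_cases hij : i = j
  · simp only [hij, if_true] at h ⊢
    have := key _ _ _ hs h
    linarith
  · simp only [hij, if_false] at h ⊢
    have := key _ _ _ hs h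
    linarith

lemma coeff_unique {v : Vn n} {t : Fin n → ℝ} (h : v = ∑ i, t i • D.sroot i) :
    ∀ j, kap D j v = t j := by
  intro j
  have hs : ⟪D.sroot j, D.sroot j⟫ ≠ (0:ℝ) := ne_of_gt (root_pos D (sroot_R D j))
  have hfw : ⟪D.fw j, v⟫ = t j * (⟪D.sroot j, D.sroot j⟫ / 2) := by
    rw [h, inner_sum]
    simp only [real_inner_smul_right, fw_sroot D, mul_ite, mul_zero,
      Finset.sum_ite_eq, Finset.mem_univ, if_true]
  have key : ∀ s x : ℝ, s ≠ 0 → 2 / s * (x * (s / 2)) = x := by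
    intro s x hsne
    field_simp
  rw [kap, hfw, key _ _ hs]

lemma root_rep (v : Vn n) : v = ∑ i, kap D i v • D.sroot i := by
  have hv : v ∈ Submodule.span ℝ (Set.range D.sroot) := by rw [sroot_span]; trivial
  obtain ⟨t, ht⟩ := (Submodule.mem_span_range_iff_exists_fun ℝ).1 hv
  have := coeff_unique D ht.symm
  conv_lhs => rw [← ht]
  refine Finset.sum_congr rfl fun i _ => ?_
  rw [this i]

lemma kap_nat {α : Vn n} (hα : α ∈ D.Rplus) (i : Fin n) : ∃ m : ℕ, kap D i α = m := by
  obtain ⟨c, hc⟩ := D.pos_decomp α hα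
  exact ⟨c i, coeff_unique D hc i⟩

lemma kap_nonneg {α : Vn n} (hα : α ∈ D.Rplus) (i : Fin n) : 0 ≤ kap D i α := by
  obtain ⟨m, hm⟩ := kap_nat D hα i
  rw [hm]; positivity

lemma exists_kap_pos {α : Vn n} (hα : α ∈ D.Rplus) : ∃ i, 0 < kap D i α := by
  by_contra h
  push_neg at h
  have hz : ∀ i, kap D i α = 0 := fun i => le_antisymm (h i) (kap_nonneg D hα i)
  have : α = 0 := by
    rw [root_rep D α]
    refine Finset.sum_eq_zero fun i _ => ?_
    rw [hz i, zero_smul]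
  exact D.root_ne_zero α (D.pos_sub hα) this

lemma mem_P_iff (v : Vn n) : v ∈ D.P ↔ ∀ i, Zint ⟪v, coroot (D.sroot i)⟫ := by
  constructor
  · intro hv
    induction hv using Submodule.span_induction with
    | mem x hx =>
        obtain ⟨j, rfl⟩ := hx
        intro i
        rw [D.fw_pair j i]
        split
        · exact Zint.one
        · exact Zint.zero
    | zero => intro i; rw [inner_zero_left]; exact Zint.zero
    | add x y _ _ hx hy => intro i; rw [inner_add_left]; exact (hx i).add (hy i)
    | smul z x _ hx =>
        intro i
        rw [← Int.cast_smul_eq_zsmul ℝ, real_inner_smul_left]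
        exact (Zint.intCast z).mul (hx i)
  · intro h
    choose z hz using h
    have hv : v = ∑ i, ((z i : ℝ)) • D.fw i := by
      apply eq_of_pair D
      intro j
      rw [hz j, sum_inner]
      simp only [real_inner_smul_left, D.fw_pair, mul_ite, mul_one, mul_zero,
        Finset.sum_ite_eq', Finset.sum_ite_eq, Finset.mem_univ, if_true]
    rw [hv]
    exact Submodule.sum_mem _ fun i _ => by
      rw [Int.cast_smul_eq_zsmul ℝ]
      exact Submodule.smul_mem _ _ (Submodule.subset_span ⟨i, rfl⟩)

lemma zsmul_mem_P {c : ℝ} {v : Vn n} (hc : Zint c) (hv : v ∈ D.P) : c • v ∈ D.P := by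
  obtain ⟨z, rfl⟩ := hc
  rw [Int.cast_smul_eq_zsmul ℝ]
  exact Submodule.smul_mem _ _ hv

lemma fw_mem_P (i : Fin n) : D.fw i ∈ D.P := Submodule.subset_span ⟨i, rfl⟩

lemma rho_mem : D.rho ∈ D.P := Submodule.sum_mem _ fun i _ => fw_mem_P D i

lemma rho_pair (i : Fin n) : ⟪D.rho, coroot (D.sroot i)⟫ = 1 := by
  rw [RootSystemData.rho, sum_inner]
  simp only [D.fw_pair, Finset.sum_ite_eq', Finset.sum_ite_eq, Finset.mem_univ, if_true]

lemma root_mem_P {α : Vn n} (hα : α ∈ D.R) : α ∈ D.P :=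
  (mem_P_iff D α).2 fun i => cry D (sroot_R D i) hα

end StrangeAux2

section StrangeAux3
open Finset
variable {n : ℕ} (D : RootSystemData n)

lemma inner_rep (u v : Vn n) : ⟪u, v⟫ = ∑ i, kap D i v * ⟪u, D.sroot i⟫ := by
  conv_lhs => rw [root_rep D v]
  rw [inner_sum]
  exact Finset.sum_congr rfl fun i _ => real_inner_smul_right _ _ _

lemma kap_neg (j : Fin n) (v : Vn n) : kap D j (-v) = -(kap D j v) := by
  unfold kap
  rw [inner_neg_right]
  ring

/-- orthogonal, P-stable, R-stable automorphisms -/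
def GoodW (w : Vn n ≃ₗ[ℝ] Vn n) : Prop :=
  (∀ u v : Vn n, ⟪w u, w v⟫ = ⟪u, v⟫) ∧ (∀ p ∈ D.P, w p ∈ D.P) ∧ (∀ p ∈ D.P, w.symm p ∈ D.P) ∧
    (∀ α ∈ D.R, w α ∈ D.R) ∧ (∀ α ∈ D.R, w.symm α ∈ D.R)

lemma coroot_map {w : Vn n ≃ₗ[ℝ] Vn n} (horth : ∀ u v : Vn n, ⟪w u, w v⟫ = ⟪u, v⟫) (α : Vn n) :
    coroot (w α) = w (coroot α) := by
  show (2 / ⟪w α, w α⟫) • (w α) = w ((2 / ⟪α, α⟫) • α)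
  rw [horth, map_smul]

lemma pair_map {w : Vn n ≃ₗ[ℝ] Vn n} (horth : ∀ u v : Vn n, ⟪w u, w v⟫ = ⟪u, v⟫) (u α : Vn n) :
    ⟪w u, coroot (w α)⟫ = ⟪u, coroot α⟫ := by
  rw [coroot_map horth, horth]

lemma pair_unmap {w : Vn n ≃ₗ[ℝ] Vn n} (horth : ∀ u v : Vn n, ⟪w u, w v⟫ = ⟪u, v⟫) (u α : Vn n) :
    ⟪u, coroot (w α)⟫ = ⟪w.symm u, coroot α⟫ := by
  rw [← pair_map horth (w.symm u) α, LinearEquiv.apply_symm_apply]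

lemma good_one : GoodW D 1 := by
  refine ⟨fun u v => rfl, fun p hp => hp, fun p hp => ?_, fun α hα => hα, fun α hα => ?_⟩
  · have : (1 : Vn n ≃ₗ[ℝ] Vn n).symm p = p := rfl
    rwa [this]
  · have : (1 : Vn n ≃ₗ[ℝ] Vn n).symm α = α := rfl
    rwa [this]

lemma good_mul {w₁ w₂ : Vn n ≃ₗ[ℝ] Vn n} (h₁ : GoodW D w₁) (h₂ : GoodW D w₂) :
    GoodW D (w₁ * w₂) := by
  have happ : ∀ v, (w₁ * w₂) v = w₁ (w₂ v) := fun v => rfl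
  have hsymm : ∀ v, (w₁ * w₂).symm v = w₂.symm (w₁.symm v) := fun v => rfl
  refine ⟨fun u v => ?_, fun p hp => ?_, fun p hp => ?_, fun α hα => ?_, fun α hα => ?_⟩
  · rw [happ, happ, h₁.1, h₂.1]
  · rw [happ]; exact h₁.2.1 _ (h₂.2.1 p hp)
  · rw [hsymm]; exact h₂.2.2.1 _ (h₁.2.2.1 p hp)
  · rw [happ]; exact h₁.2.2.2.1 _ (h₂.2.2.2.1 α hα)
  · rw [hsymm]; exact h₂.2.2.2.2 _ (h₁.2.2.2.2 α hα)

lemma good_symm {w : Vn n ≃ₗ[ℝ] Vn n} (h : GoodW D w) : GoodW D w.symm := by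
  refine ⟨fun u v => ?_, h.2.2.1, ?_, h.2.2.2.2, ?_⟩
  · have := h.1 (w.symm u) (w.symm v)
    rw [LinearEquiv.apply_symm_apply, LinearEquiv.apply_symm_apply] at this
    exact this.symm
  · rw [LinearEquiv.symm_symm]; exact h.2.1
  · rw [LinearEquiv.symm_symm]; exact h.2.2.2.1

lemma good_sRefl_simple (i : Fin n) : GoodW D (sRefl (D.sroot i)) := by
  have hP : ∀ p ∈ D.P, sRefl (D.sroot i) p ∈ D.P := by
    intro p hp
    rw [sRefl_apply]
    exact Submodule.sub_mem _ hp (zsmul_mem_P D ((mem_P_iff D p).1 hp i)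
      (root_mem_P D (sroot_R D i)))
  have hR : ∀ α ∈ D.R, sRefl (D.sroot i) α ∈ D.R := by
    intro α hα
    rw [sRefl_reflVec]
    exact D.reflect_mem _ (sroot_R D i) _ hα
  exact ⟨sRefl_inner _, hP, by rw [sRefl_symm]; exact hP, hR, by rw [sRefl_symm]; exact hR⟩

lemma sRefl_mem {α : Vn n} (hα : α ∈ D.R) : sRefl α ∈ D.Weyl :=
  Subgroup.subset_closure ⟨α, hα, fun v => sRefl_reflVec α v⟩

lemma srefl_plus {α : Vn n} (i : Fin n) (hα : α ∈ D.Rplus) (hne : α ≠ D.sroot i) :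
    sRefl (D.sroot i) α ∈ D.Rplus := by
  have hβR : sRefl (D.sroot i) α ∈ D.R := by
    rw [sRefl_reflVec]
    exact D.reflect_mem _ (sroot_R D i) _ (D.pos_sub hα)
  by_contra hβ
  have hnegβ : -(sRefl (D.sroot i) α) ∈ D.Rplus := (D.pos_or _ hβR).resolve_left hβ
  have hexj : ∃ j, j ≠ i ∧ 0 < kap D j α := by
    by_contra hno
    push_neg at hno
    have hz : ∀ j, j ≠ i → kap D j α = 0 := fun j hj =>
      le_antisymm (hno j hj) (kap_nonneg D hα j)
    have hαi : α = kap D i α • D.sroot i := by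
      conv_lhs => rw [root_rep D α]
      rw [Finset.sum_eq_single i (fun j _ hj => by rw [hz j hj, zero_smul])
        (fun h => absurd (Finset.mem_univ i) h)]
    rcases D.reduced (D.sroot i) (sroot_R D i) (kap D i α)
        (by rw [← hαi]; exact D.pos_sub hα) with h1 | h1
    · exact hne (by rw [hαi, h1, one_smul])
    · have := kap_nonneg D hα i
      rw [h1] at this
      linarith
  obtain ⟨j, hji, hj⟩ := hexj
  have hfwβ : ⟪D.fw j, sRefl (D.sroot i) α⟫ = ⟪D.fw j, α⟫ := by
    rw [sRefl_apply, inner_sub_right, real_inner_smul_right, fw_sroot D j i,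
      if_neg hji, mul_zero, sub_zero]
  have hkapβ : kap D j (sRefl (D.sroot i) α) = kap D j α := by
    unfold kap
    rw [hfwβ]
  have := kap_nonneg D hnegβ j
  rw [kap_neg, hkapβ] at this
  linarith

lemma orbit_pos : ∀ (m : ℕ) (α : Vn n), α ∈ D.Rplus → (∑ i, kap D i α) ≤ (m:ℝ) →
    ∃ w : Vn n ≃ₗ[ℝ] Vn n, GoodW D w ∧ w ∈ D.Weyl ∧ ∃ i, α = w (D.sroot i) := by
  intro m
  induction m with
  | zero =>
    intro α hα hm
    obtain ⟨i, hi⟩ := exists_kap_pos D hα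
    have hle : kap D i α ≤ ∑ j, kap D j α :=
      Finset.single_le_sum (fun j _ => kap_nonneg D hα j) (Finset.mem_univ i)
    push_cast at hm
    linarith
  | succ m IH =>
    intro α hα hm
    by_cases hsimple : ∃ i, α = D.sroot i
    · obtain ⟨i, hi⟩ := hsimple
      exact ⟨1, good_one D, one_mem _, i, hi⟩
    · push_neg at hsimple
      have hpos : 0 < ⟪α, α⟫ := root_pos D (D.pos_sub hα)
      have hex : ∃ i, 0 < kap D i α * ⟪α, D.sroot i⟫ := by
        by_contra hno
        push_neg at hno
        have : ⟪α, α⟫ ≤ 0 := by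
          rw [inner_rep D α α]
          exact Finset.sum_nonpos fun i _ => hno i
        linarith
      obtain ⟨i, hi⟩ := hex
      have hkapi : 0 ≤ kap D i α := kap_nonneg D hα i
      have hinner_pos : 0 < ⟪α, D.sroot i⟫ := by
        rcases mul_pos_iff.1 hi with ⟨h1, h2⟩ | ⟨h1, h2⟩
        · exact h2
        · linarith
      have hs : 0 < ⟪D.sroot i, D.sroot i⟫ := root_pos D (sroot_R D i)
      have hk_pos : 0 < ⟪α, coroot (D.sroot i)⟫ := by
        rw [pair_eq]
        positivity
      have hkZ : Zint ⟪α, coroot (D.sroot i)⟫ := cry D (sroot_R D i) (D.pos_sub hα)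
      have hk1 : 1 ≤ ⟪α, coroot (D.sroot i)⟫ := hkZ.one_le hk_pos
      have hβplus : sRefl (D.sroot i) α ∈ D.Rplus := srefl_plus D i hα (hsimple i)
      have hkapβ : ∀ j, kap D j (sRefl (D.sroot i) α)
          = kap D j α - (if j = i then ⟪α, coroot (D.sroot i)⟫ else 0) := by
        intro j
        unfold kap
        rw [sRefl_apply, inner_sub_right, real_inner_smul_right, fw_sroot D j i]
        by_cases hji : j = i
        · subst hji
          rw [if_pos rfl, if_pos rfl]
          have hsj : ⟪D.sroot j, D.sroot j⟫ ≠ (0:ℝ) := ne_of_gt (root_pos D (sroot_R D j))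
          have key : ∀ s x k : ℝ, s ≠ 0 → 2 / s * (x - k * (s / 2)) = 2 / s * x - k := by
            intro s x k hsne
            field_simp
          exact key _ _ _ hsj
        · rw [if_neg hji, if_neg hji, mul_zero, sub_zero, sub_zero]
      have hsum : ∑ j, kap D j (sRefl (D.sroot i) α)
          = (∑ j, kap D j α) - ⟪α, coroot (D.sroot i)⟫ := by
        rw [Finset.sum_congr rfl fun j _ => hkapβ j, Finset.sum_sub_distrib,
          Finset.sum_ite_eq' Finset.univ i (fun _ => ⟪α, coroot (D.sroot i)⟫)]
        rw [if_pos (Finset.mem_univ i)]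
      have hm' : ∑ j, kap D j (sRefl (D.sroot i) α) ≤ (m:ℝ) := by
        push_cast at hm
        rw [hsum]
        linarith
      obtain ⟨w, hw, hwW, j, hj⟩ := IH (sRefl (D.sroot i) α) hβplus hm'
      refine ⟨sRefl (D.sroot i) * w, good_mul D (good_sRefl_simple D i) hw,
        mul_mem (sRefl_mem D (sroot_R D i)) hwW, j, ?_⟩
      have happ : (sRefl (D.sroot i) * w) (D.sroot j) = sRefl (D.sroot i) (w (D.sroot j)) := rfl
      rw [happ, ← hj, sRefl_sRefl]

/-- integrality of coroot pairings on the weight lattice -/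
lemma P_pair {α p : Vn n} (hα : α ∈ D.R) (hp : p ∈ D.P) : Zint ⟪p, coroot α⟫ := by
  have key : ∀ β ∈ D.Rplus, Zint ⟪p, coroot β⟫ := by
    intro β hβ
    obtain ⟨w, hw, _, i, rfl⟩ := orbit_pos D ⌈∑ i, kap D i β⌉₊ β hβ (Nat.le_ceil _)
    rw [pair_unmap hw.1]
    exact (mem_P_iff D _).1 (hw.2.2.1 p hp) i
  rcases D.pos_or α hα with h | h
  · exact key α h
  · have h2 := (key _ h).neg
    rw [coroot_neg, inner_neg_right, neg_neg] at h2
    exact h2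

lemma good_sRefl {α : Vn n} (hα : α ∈ D.R) : GoodW D (sRefl α) := by
  have hP : ∀ p ∈ D.P, sRefl α p ∈ D.P := by
    intro p hp
    rw [sRefl_apply]
    exact Submodule.sub_mem _ hp (zsmul_mem_P D (P_pair D hα hp) (root_mem_P D hα))
  have hR : ∀ β ∈ D.R, sRefl α β ∈ D.R := by
    intro β hβ
    rw [sRefl_reflVec]
    exact D.reflect_mem _ hα _ hβ
  exact ⟨sRefl_inner _, hP, by rw [sRefl_symm]; exact hP, hR, by rw [sRefl_symm]; exact hR⟩

lemma good_of_mem {w : Vn n ≃ₗ[ℝ] Vn n} (hw : w ∈ D.Weyl) : GoodW D w := by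
  induction hw using Subgroup.closure_induction with
  | mem x hx =>
    obtain ⟨α, hα, hxα⟩ := hx
    have hxeq : x = sRefl α := LinearEquiv.ext fun v => by rw [hxα v, sRefl_reflVec]
    rw [hxeq]
    exact good_sRefl D hα
  | one => exact good_one D
  | mul x y hx hy gx gy => exact good_mul D gx gy
  | inv x hx gx =>
    have : x⁻¹ = x.symm := rfl
    rw [this]
    exact good_symm D gx

end StrangeAux3

section StrangeAux4
open Finset
variable {n : ℕ} (D : RootSystemData n)

include D in
lemma n_pos : 0 < n := by
  rcases Nat.eq_zero_or_pos n with h | h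
  · exfalso
    have hθ : D.hst ∈ D.R := theta_R D
    have h0 : D.hst = 0 := by
      have h1 := root_rep D D.hst
      subst h
      rwa [Finset.univ_eq_empty, Finset.sum_empty] at h1
    exact D.root_ne_zero _ hθ h0
  · exact h

/-- the coefficients of `θ^∨` on the simple coroots -/
def dd (i : Fin n) : ℝ := ⟪D.fw i, coroot D.hst⟫

lemma fw_le_dd {α : Vn n} (hα : α ∈ D.R) (i : Fin n) : ⟪D.fw i, coroot α⟫ ≤ dd D i := by
  obtain ⟨c, hc0, hc⟩ := D.theta_highest α hα
  have h1 := congrArg (fun u : Vn n => ⟪D.fw i, u⟫) hc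
  rw [inner_sub_right, inner_sum] at h1
  have hsum : ∑ k, ⟪D.fw i, c k • coroot (D.sroot k)⟫ = c i := by
    simp only [real_inner_smul_right, D.fw_pair, mul_ite, mul_one, mul_zero,
      Finset.sum_ite_eq, Finset.mem_univ, if_true]
  rw [hsum] at h1
  have := hc0 i
  unfold dd
  linarith

lemma one_le_dd (i : Fin n) : 1 ≤ dd D i := by
  obtain ⟨c, hc0, hc⟩ := D.theta_highest (D.sroot i) (sroot_R D i)
  have h1 := congrArg (fun u : Vn n => ⟪D.fw i, u⟫) hc
  rw [inner_sub_right, inner_sum] at h1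
  have hsum : ∑ k, ⟪D.fw i, c k • coroot (D.sroot k)⟫ = c i := by
    simp only [real_inner_smul_right, D.fw_pair, mul_ite, mul_one, mul_zero,
      Finset.sum_ite_eq, Finset.mem_univ, if_true]
  rw [hsum, D.fw_pair i i, if_pos rfl] at h1
  have := hc0 i
  unfold dd
  linarith

lemma Kr_eq : ⟪D.rho, coroot D.hst⟫ = ∑ i, dd D i := by
  rw [inner_expand D D.rho (coroot D.hst)]
  refine Finset.sum_congr rfl fun i _ => ?_
  rw [rho_pair D, mul_one]
  rfl

lemma Zint_Kr : Zint ⟪D.rho, coroot D.hst⟫ := P_pair D (theta_R D) (rho_mem D)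

lemma one_le_Kr : 1 ≤ ⟪D.rho, coroot D.hst⟫ := by
  rw [Kr_eq]
  have i0 : Fin n := ⟨0, n_pos D⟩
  calc (1:ℝ) ≤ dd D i0 := one_le_dd D i0
  _ ≤ ∑ i, dd D i :=
    Finset.single_le_sum (fun i _ => le_trans zero_le_one (one_le_dd D i)) (Finset.mem_univ i0)

lemma Nr_eq : 1 + D.h = ⟪D.rho, coroot D.hst⟫ + 2 := by
  rw [RootSystemData.h]; ring

lemma Zint_Nr : Zint (1 + D.h) := by
  rw [Nr_eq]
  exact (Zint_Kr D).add ⟨2, by norm_num⟩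

lemma three_le_Nr : 3 ≤ 1 + D.h := by
  rw [Nr_eq]
  linarith [one_le_Kr D]

lemma pair_le_theta {α v : Vn n} (hα : α ∈ D.R) (hv : ∀ i, 0 ≤ ⟪v, coroot (D.sroot i)⟫) :
    ⟪v, coroot α⟫ ≤ ⟪v, coroot D.hst⟫ := by
  obtain ⟨c, hc0, hc⟩ := D.theta_highest α hα
  have h1 := congrArg (fun u : Vn n => ⟪v, u⟫) hc
  rw [inner_sub_right, inner_sum] at h1
  have hnn : 0 ≤ ∑ i, ⟪v, c i • coroot (D.sroot i)⟫ := by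
    refine Finset.sum_nonneg fun i _ => ?_
    rw [real_inner_smul_right]
    exact mul_nonneg (hc0 i) (hv i)
  linarith

lemma fw_coroot_nonneg {α : Vn n} (hα : α ∈ D.Rplus) (i : Fin n) :
    0 ≤ ⟪D.fw i, coroot α⟫ := by
  have hs := root_pos D (D.pos_sub hα)
  have h2 : 0 ≤ ⟪D.fw i, α⟫ := by
    rw [inner_rep D (D.fw i) α]
    refine Finset.sum_nonneg fun j _ => ?_
    rw [fw_sroot D i j]
    by_cases hij : i = j
    · rw [if_pos hij]
      have := root_pos D (sroot_R D j)
      exact mul_nonneg (kap_nonneg D hα j) (by linarith)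
    · rw [if_neg hij, mul_zero]
  rw [pair_eq]
  positivity

lemma rho_pos_pair {α : Vn n} (hα : α ∈ D.Rplus) : 1 ≤ ⟪D.rho, coroot α⟫ := by
  have hZ := P_pair D (D.pos_sub hα) (rho_mem D)
  have hs := root_pos D (D.pos_sub hα)
  have hρα : 0 < ⟪D.rho, α⟫ := by
    obtain ⟨j0, hj0⟩ := exists_kap_pos D hα
    rw [inner_rep D D.rho α]
    have hterm : ∀ j, 0 ≤ kap D j α * ⟪D.rho, D.sroot j⟫ := by
      intro j
      have h1 := rho_pair D j
      rw [pair_eq, div_eq_one_iff_eq (ne_of_gt (root_pos D (sroot_R D j)))] at h1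
      have hsj := root_pos D (sroot_R D j)
      have h2 : 0 < ⟪D.rho, D.sroot j⟫ := by linarith
      exact mul_nonneg (kap_nonneg D hα j) (le_of_lt h2)
    have hj0pos : 0 < kap D j0 α * ⟪D.rho, D.sroot j0⟫ := by
      have h1 := rho_pair D j0
      rw [pair_eq, div_eq_one_iff_eq (ne_of_gt (root_pos D (sroot_R D j0)))] at h1
      have hsj := root_pos D (sroot_R D j0)
      have h2 : 0 < ⟪D.rho, D.sroot j0⟫ := by linarith
      exact mul_pos hj0 h2
    calc (0:ℝ) < kap D j0 α * ⟪D.rho, D.sroot j0⟫ := hj0pos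
    _ ≤ ∑ j, kap D j α * ⟪D.rho, D.sroot j⟫ :=
      Finset.single_le_sum (fun j _ => hterm j) (Finset.mem_univ j0)
  have hpos : 0 < ⟪D.rho, coroot α⟫ := by
    rw [pair_eq]
    positivity
  exact hZ.one_le hpos

lemma rho_dominant (i : Fin n) : 0 ≤ ⟪D.rho, coroot (D.sroot i)⟫ := by
  rw [rho_pair D]; norm_num

lemma rho_bounds {α : Vn n} (hα : α ∈ D.R) :
    Zint ⟪D.rho, coroot α⟫ ∧ 1 ≤ |⟪D.rho, coroot α⟫| ∧
      |⟪D.rho, coroot α⟫| ≤ ⟪D.rho, coroot D.hst⟫ := by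
  have hZ := P_pair D hα (rho_mem D)
  rcases D.pos_or α hα with h | h
  · have h1 := rho_pos_pair D h
    have h2 : ⟪D.rho, coroot α⟫ ≤ ⟪D.rho, coroot D.hst⟫ :=
      pair_le_theta D hα (rho_dominant D)
    rw [abs_of_pos (by linarith)]
    exact ⟨hZ, h1, h2⟩
  · have h1 := rho_pos_pair D h
    have h2 : ⟪D.rho, coroot (-α)⟫ ≤ ⟪D.rho, coroot D.hst⟫ :=
      pair_le_theta D (D.pos_sub h) (rho_dominant D)
    have hneg : ⟪D.rho, coroot (-α)⟫ = -⟪D.rho, coroot α⟫ := by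
      rw [coroot_neg, inner_neg_right]
    rw [hneg] at h1 h2
    have hKr := one_le_Kr D
    rw [abs_of_neg (by linarith)]
    exact ⟨hZ, by linarith, by linarith⟩

end StrangeAux4

section StrangeAux5
open Finset
variable {n : ℕ} (D : RootSystemData n)

/-- squared distance to `ρ` -/
def muD (y : Vn n) : ℝ := ⟪y - D.rho, y - D.rho⟫

/-- descent measure -/
def nuD (y : Vn n) : ℕ := ⌈muD D y / ⟪D.hst, D.hst⟫⌉₊

lemma theta_pos : 0 < ⟪D.hst, D.hst⟫ := root_pos D (theta_R D)

lemma mu_nonneg (y : Vn n) : 0 ≤ muD D y := real_inner_self_nonneg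

lemma nu_lt {y y' : Vn n} (h : muD D y' ≤ muD D y - ⟪D.hst, D.hst⟫) : nuD D y' < nuD D y := by
  have hθ := theta_pos D
  rw [nuD, nuD, Nat.lt_ceil]
  have h1 : (⌈muD D y' / ⟪D.hst, D.hst⟫⌉₊ : ℝ) < muD D y' / ⟪D.hst, D.hst⟫ + 1 :=
    Nat.ceil_lt_add_one (div_nonneg (mu_nonneg D y') hθ.le)
  have h2 : muD D y' / ⟪D.hst, D.hst⟫ ≤ (muD D y - ⟪D.hst, D.hst⟫) / ⟪D.hst, D.hst⟫ := by
    gcongr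
  have key : (muD D y - ⟪D.hst, D.hst⟫) / ⟪D.hst, D.hst⟫ + 1 = muD D y / ⟪D.hst, D.hst⟫ := by
    rw [sub_div, div_self (ne_of_gt hθ)]
    ring
  linarith

lemma inner_sub_smul_self (u w : Vn n) (c : ℝ) :
    ⟪u - c • w, u - c • w⟫ = ⟪u, u⟫ - 2*c*⟪u, w⟫ + c^2 * ⟪w, w⟫ := by
  rw [inner_sub_left, inner_sub_right, inner_sub_right, real_inner_smul_left,
    real_inner_smul_left, real_inner_smul_right, real_inner_smul_right, real_inner_comm w u]
  ring

lemma half_pair {x s t : ℝ} (hs : s ≠ 0) (h : t = 2 * x / s) : x = t * s / 2 := by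
  field_simp at h ⊢
  linarith

lemma mu_srefl {α : Vn n} (hα : α ∈ D.R) (y : Vn n) :
    muD D (sRefl α y) = muD D y + ⟪α, α⟫ * (⟪y, coroot α⟫ * ⟪D.rho, coroot α⟫) := by
  have hs := root_pos D hα
  have hsne := ne_of_gt hs
  have hyα : ⟪y, α⟫ = ⟪y, coroot α⟫ * ⟪α, α⟫ / 2 := half_pair hsne (pair_eq y α)
  have hρα : ⟪D.rho, α⟫ = ⟪D.rho, coroot α⟫ * ⟪α, α⟫ / 2 := half_pair hsne (pair_eq D.rho α)
  have hre : sRefl α y - D.rho = (y - D.rho) - ⟪y, coroot α⟫ • α := by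
    rw [sRefl_apply]
    abel
  rw [muD, muD, hre, inner_sub_smul_self, inner_sub_left y D.rho α, hyα, hρα]
  ring

lemma mu_theta_step (y : Vn n) :
    muD D (y - (⟪y, coroot D.hst⟫ - (1 + D.h)) • D.hst)
      = muD D y - 2*⟪D.hst, D.hst⟫*(⟪y, coroot D.hst⟫ - (1 + D.h)) := by
  have hs := theta_pos D
  have hsne := ne_of_gt hs
  have hyθ : ⟪y, D.hst⟫ = ⟪y, coroot D.hst⟫ * ⟪D.hst, D.hst⟫ / 2 :=
    half_pair hsne (pair_eq y D.hst)
  have hρθ : ⟪D.rho, D.hst⟫ = ⟪D.rho, coroot D.hst⟫ * ⟪D.hst, D.hst⟫ / 2 :=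
    half_pair hsne (pair_eq D.rho D.hst)
  have hre : y - (⟪y, coroot D.hst⟫ - (1 + D.h)) • D.hst - D.rho
      = (y - D.rho) - (⟪y, coroot D.hst⟫ - (1 + D.h)) • D.hst := by abel
  rw [muD, muD, hre, inner_sub_smul_self, inner_sub_left y D.rho D.hst, hyθ, hρθ, Nr_eq D]
  ring

lemma stepA_mu {y : Vn n} {i : Fin n} (ht1 : ⟪y, coroot (D.sroot i)⟫ ≤ -1) :
    muD D (sRefl (D.sroot i) y) ≤ muD D y - ⟪D.hst, D.hst⟫ := by
  rw [mu_srefl D (sroot_R D i), rho_pair D i, mul_one]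
  have hss := D.theta_short _ (sroot_R D i)
  have hsp := root_pos D (sroot_R D i)
  have hθ := theta_pos D
  have h1 : ⟪D.sroot i, D.sroot i⟫ * ⟪y, coroot (D.sroot i)⟫
      ≤ ⟪D.sroot i, D.sroot i⟫ * (-1) :=
    mul_le_mul_of_nonneg_left ht1 hsp.le
  linarith

/-- regularity mod `N` -/
def RegD (y : Vn n) : Prop := ∀ α ∈ D.R, ∀ z : ℤ, ⟪y, coroot α⟫ ≠ (1 + D.h) * (z : ℝ)

/-- the invariant for the final descent -/
def InvD (x : Vn n) : Prop :=
  ∀ α ∈ D.R, Zint ⟪x, coroot α⟫ ∧ ⟪x, coroot α⟫ ≠ 0 ∧ |⟪x, coroot α⟫| ≤ (1 + D.h) - 2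

lemma srefl_pair_move (α y β : Vn n) :
    ⟪sRefl α y, coroot β⟫ = ⟪y, coroot (sRefl α β)⟫ := by
  have h := pair_map (sRefl_inner α) y (sRefl α β)
  rw [sRefl_sRefl] at h
  exact h

lemma reg_srefl {α : Vn n} (hα : α ∈ D.R) {y : Vn n} (hy : RegD D y) : RegD D (sRefl α y) := by
  intro β hβ z
  rw [srefl_pair_move]
  exact hy _ ((good_sRefl D hα).2.2.2.1 β hβ) z

lemma inv_srefl {α : Vn n} (hα : α ∈ D.R) {x : Vn n} (hx : InvD D x) : InvD D (sRefl α x) := by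
  intro β hβ
  rw [srefl_pair_move]
  exact hx _ ((good_sRefl D hα).2.2.2.1 β hβ)

lemma theta_affine (y : Vn n) :
    y - (⟪y, coroot D.hst⟫ - (1 + D.h)) • D.hst = sRefl D.hst y + (1 + D.h) • D.hst := by
  rw [sRefl_apply, sub_smul]
  abel

lemma theta_back (y : Vn n) :
    y = sRefl D.hst (y - (⟪y, coroot D.hst⟫ - (1 + D.h)) • D.hst) + (1 + D.h) • D.hst := by
  have hθne : D.hst ≠ 0 := D.root_ne_zero _ (theta_R D)
  have hself : sRefl D.hst D.hst = -D.hst := by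
    rw [sRefl_apply, pair_self hθne, two_smul]
    abel
  rw [theta_affine D y, map_add, map_smul, sRefl_sRefl, hself, smul_neg]
  abel

lemma reg_theta {y : Vn n} (hy : RegD D y) :
    RegD D (y - (⟪y, coroot D.hst⟫ - (1 + D.h)) • D.hst) := by
  intro β hβ z
  rw [theta_affine D y, inner_add_left, real_inner_smul_left, srefl_pair_move]
  obtain ⟨m, hm⟩ := cry D hβ (theta_R D)
  rw [hm]
  intro hcon
  apply hy _ ((good_sRefl D (theta_R D)).2.2.2.1 β hβ) (z - m)
  push_cast
  linarith

/-- descent for the bounded-invariant case -/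
lemma descB : ∀ (m : ℕ) (x : Vn n), x ∈ D.P → InvD D x → nuD D x < m →
    ∃ w ∈ D.Weyl, x = w D.rho := by
  intro m
  induction m with
  | zero => intro x _ _ h; exact absurd h (Nat.not_lt_zero _)
  | succ m IH =>
    intro x hxP hxI hxν
    by_cases hneg : ∃ i, ⟪x, coroot (D.sroot i)⟫ < 0
    · obtain ⟨i, hi⟩ := hneg
      have hαR := sroot_R D i
      obtain ⟨hZ, hne, habs⟩ := hxI _ hαR
      have ht1 : ⟪x, coroot (D.sroot i)⟫ ≤ -1 := by
        have := hZ.one_le_abs hne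
        rw [abs_of_neg hi] at this
        linarith
      obtain ⟨w, hwW, hwx⟩ := IH _ ((good_sRefl D hαR).2.1 x hxP) (inv_srefl D hαR hxI)
        (lt_of_lt_of_le (nu_lt D (stepA_mu D ht1)) (Nat.lt_succ_iff.1 hxν))
      refine ⟨sRefl (D.sroot i) * w, mul_mem (sRefl_mem D hαR) hwW, ?_⟩
      have happ : (sRefl (D.sroot i) * w) D.rho = sRefl (D.sroot i) (w D.rho) := rfl
      rw [happ, ← hwx, sRefl_sRefl]
    · push_neg at hneg
      have hti : ∀ i, 1 ≤ ⟪x, coroot (D.sroot i)⟫ := by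
        intro i
        obtain ⟨hZ, hne, _⟩ := hxI _ (sroot_R D i)
        exact hZ.one_le (lt_of_le_of_ne (hneg i) (Ne.symm hne))
      have hθk : ⟪x, coroot D.hst⟫ ≤ (1 + D.h) - 2 := by
        obtain ⟨_, _, habs⟩ := hxI _ (theta_R D)
        exact le_trans (le_abs_self _) habs
      have hexp : ⟪x, coroot D.hst⟫ = ∑ i, dd D i * ⟪x, coroot (D.sroot i)⟫ :=
        inner_expand D x (coroot D.hst)
      have hKr : ⟪D.rho, coroot D.hst⟫ = ∑ i, dd D i := Kr_eq D
      have hNr := Nr_eq D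
      have hsum_le : ∑ i, dd D i * (⟪x, coroot (D.sroot i)⟫ - 1) ≤ 0 := by
        have hh : ∑ i, dd D i * (⟪x, coroot (D.sroot i)⟫ - 1)
            = (∑ i, dd D i * ⟪x, coroot (D.sroot i)⟫) - ∑ i, dd D i := by
          rw [← Finset.sum_sub_distrib]
          exact Finset.sum_congr rfl fun i _ => by ring
        rw [hh, ← hexp, ← hKr]
        linarith
      have hterm0 : ∀ i, dd D i * (⟪x, coroot (D.sroot i)⟫ - 1) = 0 := by
        have hnn : ∀ i ∈ Finset.univ, (0:ℝ) ≤ dd D i * (⟪x, coroot (D.sroot i)⟫ - 1) :=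
          fun i _ => mul_nonneg (by linarith [one_le_dd D i]) (by linarith [hti i])
        have := (Finset.sum_eq_zero_iff_of_nonneg hnn).1
          (le_antisymm hsum_le (Finset.sum_nonneg hnn))
        intro i
        exact this i (Finset.mem_univ i)
      have hx1 : ∀ i, ⟪x, coroot (D.sroot i)⟫ = 1 := by
        intro i
        have hd := one_le_dd D i
        rcases mul_eq_zero.1 (hterm0 i) with h | h
        · linarith
        · linarith
      refine ⟨1, one_mem _, ?_⟩
      have h1 : (1 : Vn n ≃ₗ[ℝ] Vn n) D.rho = D.rho := rfl
      rw [h1]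
      exact eq_of_pair D fun i => by rw [hx1 i, rho_pair D i]

lemma endgame {y : Vn n} (hyP : y ∈ D.P) (hyR : RegD D y)
    (hdom : ∀ i, 0 ≤ ⟪y, coroot (D.sroot i)⟫) (hsm : ⟪y, coroot D.hst⟫ ≤ 1 + D.h) :
    InvD D (y - (1 + D.h) • (y - D.rho)) := by
  have hNr := Nr_eq D
  have hN3 := three_le_Nr D
  have hNZ := Zint_Nr D
  have hti : ∀ i, 1 ≤ ⟪y, coroot (D.sroot i)⟫ := by
    intro i
    refine ((mem_P_iff D y).1 hyP i).one_le (lt_of_le_of_ne (hdom i) (Ne.symm ?_))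
    intro h0
    exact hyR _ (sroot_R D i) 0 (by rw [h0, Int.cast_zero, mul_zero])
  have hkZ : Zint ⟪y, coroot D.hst⟫ := P_pair D (theta_R D) hyP
  have hkne : ⟪y, coroot D.hst⟫ ≠ 1 + D.h := by
    intro h
    exact hyR _ (theta_R D) 1 (by rw [h, Int.cast_one, mul_one])
  have hkle : ⟪y, coroot D.hst⟫ ≤ (1 + D.h) - 1 := by
    have h1 := hkZ.add_one_le hNZ (lt_of_le_of_ne hsm hkne)
    linarith
  intro α hα
  suffices key : ∀ β ∈ D.Rplus, Zint ⟪y - (1 + D.h) • (y - D.rho), coroot β⟫ ∧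
      ⟪y - (1 + D.h) • (y - D.rho), coroot β⟫ ≠ 0 ∧
      |⟪y - (1 + D.h) • (y - D.rho), coroot β⟫| ≤ (1 + D.h) - 2 by
    rcases D.pos_or α hα with h | h
    · exact key α h
    · obtain ⟨hZ, hne, habs⟩ := key _ h
      have hcneg : ⟪y - (1 + D.h) • (y - D.rho), coroot α⟫
          = -⟪y - (1 + D.h) • (y - D.rho), coroot (-α)⟫ := by
        rw [coroot_neg, inner_neg_right, neg_neg]
      rw [hcneg]
      exact ⟨hZ.neg, neg_ne_zero.2 hne, by rwa [abs_neg]⟩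
  intro β hβ
  have hβR := D.pos_sub hβ
  have haZ : Zint ⟪y, coroot β⟫ := P_pair D hβR hyP
  have hrZ : Zint ⟪D.rho, coroot β⟫ := P_pair D hβR (rho_mem D)
  have hr1 : 1 ≤ ⟪D.rho, coroot β⟫ := rho_pos_pair D hβ
  have hrK : ⟪D.rho, coroot β⟫ ≤ ⟪D.rho, coroot D.hst⟫ := pair_le_theta D hβR (rho_dominant D)
  have hak : ⟪y, coroot β⟫ ≤ ⟪y, coroot D.hst⟫ := pair_le_theta D hβR hdom
  have htZ : Zint (⟪y, coroot β⟫ - ⟪D.rho, coroot β⟫) := haZ.sub hrZ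
  have hae : ⟪y, coroot β⟫ = ∑ i, ⟪D.fw i, coroot β⟫ * ⟪y, coroot (D.sroot i)⟫ :=
    inner_expand D y (coroot β)
  have hre : ⟪D.rho, coroot β⟫ = ∑ i, ⟪D.fw i, coroot β⟫ * ⟪D.rho, coroot (D.sroot i)⟫ :=
    inner_expand D D.rho (coroot β)
  have hdiff : ⟪y, coroot β⟫ - ⟪D.rho, coroot β⟫
      = ∑ i, ⟪D.fw i, coroot β⟫ * (⟪y, coroot (D.sroot i)⟫ - 1) := by
    rw [hae, hre, ← Finset.sum_sub_distrib]
    refine Finset.sum_congr rfl fun i _ => ?_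
    rw [rho_pair D i]
    ring
  have ht_nonneg : 0 ≤ ⟪y, coroot β⟫ - ⟪D.rho, coroot β⟫ := by
    rw [hdiff]
    refine Finset.sum_nonneg fun i _ => ?_
    exact mul_nonneg (fw_coroot_nonneg D hβ i) (by linarith [hti i])
  have ht_le : ⟪y, coroot β⟫ - ⟪D.rho, coroot β⟫ ≤ 1 := by
    have hkeq : ⟪y, coroot D.hst⟫ = ∑ i, dd D i * ⟪y, coroot (D.sroot i)⟫ :=
      inner_expand D y (coroot D.hst)
    have hKr : ⟪D.rho, coroot D.hst⟫ = ∑ i, dd D i := Kr_eq D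
    have hstep : ∑ i, ⟪D.fw i, coroot β⟫ * (⟪y, coroot (D.sroot i)⟫ - 1)
        ≤ ∑ i, dd D i * (⟪y, coroot (D.sroot i)⟫ - 1) :=
      Finset.sum_le_sum fun i _ =>
        mul_le_mul_of_nonneg_right (fw_le_dd D hβR i) (by linarith [hti i])
    have hdsum : ∑ i, dd D i * (⟪y, coroot (D.sroot i)⟫ - 1)
        = (∑ i, dd D i * ⟪y, coroot (D.sroot i)⟫) - ∑ i, dd D i := by
      rw [← Finset.sum_sub_distrib]
      exact Finset.sum_congr rfl fun i _ => by ring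
    rw [hdiff]
    calc ∑ i, ⟪D.fw i, coroot β⟫ * (⟪y, coroot (D.sroot i)⟫ - 1)
        ≤ ∑ i, dd D i * (⟪y, coroot (D.sroot i)⟫ - 1) := hstep
    _ = ⟪y, coroot D.hst⟫ - ⟪D.rho, coroot D.hst⟫ := by rw [hdsum, ← hkeq, ← hKr]
    _ ≤ 1 := by linarith
  have hxval : ⟪y - (1 + D.h) • (y - D.rho), coroot β⟫
      = ⟪y, coroot β⟫ - (1 + D.h) * (⟪y, coroot β⟫ - ⟪D.rho, coroot β⟫) := by
    rw [inner_sub_left, real_inner_smul_left, inner_sub_left]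
  rw [hxval]
  rcases htZ.eq_zero_or_eq_one ht_nonneg ht_le with h0 | h1
  · rw [h0, mul_zero, sub_zero]
    have har : ⟪y, coroot β⟫ = ⟪D.rho, coroot β⟫ := by linarith
    refine ⟨haZ, by linarith, ?_⟩
    rw [abs_of_pos (by linarith)]
    linarith
  · rw [h1, mul_one]
    have hub : ⟪y, coroot β⟫ - (1 + D.h) ≤ -1 := by linarith
    have hlb : -((1 + D.h) - 2) ≤ ⟪y, coroot β⟫ - (1 + D.h) := by linarith
    refine ⟨haZ.sub hNZ, by linarith, ?_⟩
    rw [abs_of_neg (by linarith)]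
    linarith

/-- the main descent -/
lemma mainDesc : ∀ (m : ℕ) (y : Vn n), y ∈ D.P → RegD D y → nuD D y < m →
    ∃ w ∈ D.Weyl, ∃ p ∈ D.P, y = w D.rho + (1 + D.h) • p := by
  intro m
  induction m with
  | zero => intro y _ _ h; exact absurd h (Nat.not_lt_zero _)
  | succ m IH =>
    intro y hyP hyR hyν
    by_cases hneg : ∃ i, ⟪y, coroot (D.sroot i)⟫ < 0
    · obtain ⟨i, hi⟩ := hneg
      have hαR := sroot_R D i
      have hZ : Zint ⟪y, coroot (D.sroot i)⟫ := (mem_P_iff D y).1 hyP i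
      have hne : ⟪y, coroot (D.sroot i)⟫ ≠ 0 := by
        intro h0
        exact hyR _ hαR 0 (by rw [h0, Int.cast_zero, mul_zero])
      have ht1 : ⟪y, coroot (D.sroot i)⟫ ≤ -1 := by
        have := hZ.one_le_abs hne
        rw [abs_of_neg hi] at this
        linarith
      obtain ⟨w, hwW, p, hpP, hwp⟩ := IH _ ((good_sRefl D hαR).2.1 y hyP)
        (reg_srefl D hαR hyR)
        (lt_of_lt_of_le (nu_lt D (stepA_mu D ht1)) (Nat.lt_succ_iff.1 hyν))
      refine ⟨sRefl (D.sroot i) * w, mul_mem (sRefl_mem D hαR) hwW,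
        sRefl (D.sroot i) p, (good_sRefl D hαR).2.1 p hpP, ?_⟩
      have h1 : y = sRefl (D.sroot i) (w D.rho + (1 + D.h) • p) := by
        rw [← hwp, sRefl_sRefl]
      rw [h1, map_add, map_smul]
      have happ : (sRefl (D.sroot i) * w) D.rho = sRefl (D.sroot i) (w D.rho) := rfl
      rw [happ]
    · by_cases hbig : (1 + D.h) < ⟪y, coroot D.hst⟫
      · have hZk : Zint ⟪y, coroot D.hst⟫ := P_pair D (theta_R D) hyP
        have hk1 : (1 + D.h) + 1 ≤ ⟪y, coroot D.hst⟫ := by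
          have := (Zint_Nr D).add_one_le hZk hbig
          linarith
        have hy'P : y - (⟪y, coroot D.hst⟫ - (1 + D.h)) • D.hst ∈ D.P :=
          Submodule.sub_mem _ hyP (zsmul_mem_P D (hZk.sub (Zint_Nr D))
            (root_mem_P D (theta_R D)))
        have hμ : muD D (y - (⟪y, coroot D.hst⟫ - (1 + D.h)) • D.hst)
            ≤ muD D y - ⟪D.hst, D.hst⟫ := by
          rw [mu_theta_step D y]
          have hθ := theta_pos D
          nlinarith
        obtain ⟨w, hwW, p, hpP, hwp⟩ := IH _ hy'P (reg_theta D hyR)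
          (lt_of_lt_of_le (nu_lt D hμ) (Nat.lt_succ_iff.1 hyν))
        refine ⟨sRefl D.hst * w, mul_mem (sRefl_mem D (theta_R D)) hwW,
          sRefl D.hst p + D.hst,
          Submodule.add_mem _ ((good_sRefl D (theta_R D)).2.1 p hpP)
            (root_mem_P D (theta_R D)), ?_⟩
        have hyb := theta_back D y
        rw [hwp] at hyb
        rw [hyb, map_add, map_smul, smul_add]
        have happ : (sRefl D.hst * w) D.rho = sRefl D.hst (w D.rho) := rfl
        rw [happ]
        abel
      · push_neg at hneg hbig
        have hxI := endgame D hyP hyR hneg hbig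
        have hxP : y - (1 + D.h) • (y - D.rho) ∈ D.P :=
          Submodule.sub_mem _ hyP (zsmul_mem_P D (Zint_Nr D)
            (Submodule.sub_mem _ hyP (rho_mem D)))
        obtain ⟨w, hwW, hwx⟩ := descB D (nuD D (y - (1 + D.h) • (y - D.rho)) + 1) _
          hxP hxI (Nat.lt_succ_self _)
        refine ⟨w, hwW, y - D.rho, Submodule.sub_mem _ hyP (rho_mem D), ?_⟩
        rw [← hwx]
        abel

end StrangeAux5

/-- set `N = 1 + h`.  An element `b ∈ P` is regular mod `N`
(`(b, α^∨) ∉ Nℤ` for all roots `α`) if and only if `b = w(ρ) + Nλ` for some `w ∈ W` and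
`λ ∈ P`; i.e. the regular elements of `P/NP` form a single `W`-orbit, the orbit of the
image of `ρ`. -/
theorem stmt_6 {n : ℕ} (D : RootSystemData n) (b : Vn n) (hb : b ∈ D.P) :
    (∀ α ∈ D.R, ∀ z : ℤ, ⟪b, coroot α⟫ ≠ (1 + D.h) * (z : ℝ)) ↔
      ∃ w ∈ D.Weyl, ∃ p ∈ D.P, b = w D.rho + (1 + D.h) • p := by
  constructor
  · intro hreg
    exact mainDesc D (nuD D b + 1) b hb hreg (Nat.lt_succ_self _)
  · rintro ⟨w, hwW, p, hpP, rfl⟩ α hα z heq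
    have hw := good_of_mem D hwW
    have hβ : w.symm α ∈ D.R := hw.2.2.2.2 α hα
    have hρ : ⟪w D.rho, coroot α⟫ = ⟪D.rho, coroot (w.symm α)⟫ := by
      have h1 := pair_map hw.1 D.rho (w.symm α)
      rw [LinearEquiv.apply_symm_apply] at h1
      exact h1
    obtain ⟨mz, hm⟩ := P_pair D hα hpP
    obtain ⟨hZ, habs1, habs2⟩ := rho_bounds D hβ
    rw [inner_add_left, real_inner_smul_left, hρ, hm] at heq
    have hval : ⟪D.rho, coroot (w.symm α)⟫ = (1 + D.h) * ((z : ℝ) - (mz : ℝ)) := by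
      rw [mul_sub]
      linarith
    have hNpos : (0:ℝ) < 1 + D.h := by linarith [three_le_Nr D]
    rcases eq_or_ne z mz with h | h
    · rw [h, sub_self, mul_zero] at hval
      rw [hval, abs_zero] at habs1
      linarith
    · have hzm : 1 ≤ |(z:ℝ) - (mz:ℝ)| := by
        refine Zint.one_le_abs ((Zint.intCast z).sub (Zint.intCast mz)) ?_
        intro hc
        apply h
        have hzz : (z:ℝ) = (mz:ℝ) := by linarith [sub_eq_zero.1 hc]
        exact_mod_cast hzz
      have habs : |⟪D.rho, coroot (w.symm α)⟫| = (1 + D.h) * |(z:ℝ) - (mz:ℝ)| := by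
        rw [hval, abs_mul, abs_of_pos hNpos]
      have hge : (1 + D.h) ≤ |⟪D.rho, coroot (w.symm α)⟫| := by
        rw [habs]
        nlinarith
      have hNr := Nr_eq D
      linarith
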